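/- Commutation relation (type A1 × A1): if the Cartan integers vanish, i.e. c_α(β) = 0 and c_β(α) = 0, then the Demazure operators commute: δ_α(δ_β(u)) = δ_β(δ_α(u)) for every u ∈ ℤ[M]. -/

import Mathlib

open AddMonoidAlgebra

noncomputable section

/-- The reflection `λ ↦ λ - c(λ) • α` associated to a root `α` and coroot `c`,
as an additive homomorphism of the weight lattice `M`. -/
def demazureReflection {M : Type*} [AddCommGroup M] (α : M) (c : M →+ ℤ) : M →+ M where
  toFun := fun lam => lam - c lam • α
  map_zero' := by simp
  map_add' := fun x y => by simp only [map_add, add_smul]; abel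

/-- The ring endomorphism of the group algebra `ℤ[M]` induced by the reflection
`s(λ) = λ - c(λ)·α`; it sends `e^λ` to `e^{s(λ)}`. -/
def demazureReflectionAlg {M : Type*} [AddCommGroup M] (α : M) (c : M →+ ℤ) :
    AddMonoidAlgebra ℤ M →+* AddMonoidAlgebra ℤ M :=
  mapDomainRingHom ℤ (demazureReflection α c)

/-! Since `M` is free, `ℤ[M]` has no zero divisors, so `1 - e^{-α}` and `1 - e^{-β}` can be cancelled
and the defining relations determine `δα`, `δβ`. Multiplied by `(1 - e^{-α})(1 - e^{-β})`, both
`δα (δβ u)` and `δβ (δα u)` become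
`u - e^{-α} sα(u) - e^{-β} sβ(u) + e^{-α} e^{-β} sα(sβ(u))`,
because `sα` fixes `e^{-β}`, `sβ` fixes `e^{-α}`, and `sα`, `sβ` commute. -/

section DemazureRelation

variable {A : Type*} [CommRing A] [NoZeroDivisors A]

theorem demazure_map_comm {σ τ : A →+* A} {x : A} {δ : A → A} (hx : 1 - x ≠ 0)
    (hδ : ∀ u, (1 - x) * δ u = u - x * σ u) (hτx : τ x = x) (hτσ : ∀ u, τ (σ u) = σ (τ u))
    (u : A) : τ (δ u) = δ (τ u) := by
  refine mul_left_cancel₀ hx ?_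
  calc (1 - x) * τ (δ u) = τ ((1 - x) * δ u) := by rw [map_mul, map_sub, map_one, hτx]
    _ = τ u - x * σ (τ u) := by rw [hδ, map_sub, map_mul, hτx, hτσ]
    _ = (1 - x) * δ (τ u) := (hδ (τ u)).symm

theorem demazure_comm {σ₁ σ₂ : A →+* A} {x₁ x₂ : A} {δ₁ δ₂ : A → A}
    (hx₁ : 1 - x₁ ≠ 0) (hx₂ : 1 - x₂ ≠ 0)
    (hδ₁ : ∀ u, (1 - x₁) * δ₁ u = u - x₁ * σ₁ u) (hδ₂ : ∀ u, (1 - x₂) * δ₂ u = u - x₂ * σ₂ u)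
    (hσ₁x₂ : σ₁ x₂ = x₂) (hσ₂x₁ : σ₂ x₁ = x₁) (hσ : ∀ u, σ₁ (σ₂ u) = σ₂ (σ₁ u)) (u : A) :
    δ₁ (δ₂ u) = δ₂ (δ₁ u) := by
  have hσ₁δ₂ := demazure_map_comm hx₂ hδ₂ hσ₁x₂ hσ
  have hσ₂δ₁ := demazure_map_comm hx₁ hδ₁ hσ₂x₁ (fun v => (hσ v).symm)
  refine mul_left_cancel₀ (mul_ne_zero hx₁ hx₂) ?_
  calc (1 - x₁) * (1 - x₂) * δ₁ (δ₂ u)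
      = (1 - x₂) * δ₂ u - x₁ * ((1 - x₂) * δ₂ (σ₁ u)) := by
        rw [mul_comm (1 - x₁), mul_assoc, hδ₁, ← hσ₁δ₂]; ring
    _ = (u - x₁ * σ₁ u) - x₂ * (σ₂ u - x₁ * σ₁ (σ₂ u)) := by
        rw [hδ₂, hδ₂, hσ]; ring
    _ = (1 - x₁) * δ₁ u - x₂ * ((1 - x₁) * δ₁ (σ₂ u)) := by rw [hδ₁, hδ₁]
    _ = (1 - x₁) * (1 - x₂) * δ₂ (δ₁ u) := by rw [mul_assoc, hδ₂, hσ₂δ₁]; ring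

end DemazureRelation

section Reflections

variable {M : Type*} [AddCommGroup M]

theorem demazureReflection_apply (α : M) (c : M →+ ℤ) (l : M) :
    demazureReflection α c l = l - c l • α := rfl

theorem demazureReflection_comm {α β : M} {cα cβ : M →+ ℤ} (h1 : cα β = 0) (h2 : cβ α = 0)
    (l : M) :
    demazureReflection α cα (demazureReflection β cβ l) =
      demazureReflection β cβ (demazureReflection α cα l) := by
  simp only [demazureReflection_apply, map_sub, map_zsmul, h1, h2, zero_smul, sub_zero]
  abel

theorem demazureReflectionAlg_single (α : M) (c : M →+ ℤ) (l : M) (r : ℤ) :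
    demazureReflectionAlg α c (single l r) = single (demazureReflection α c l) r :=
  mapDomain_single

theorem demazureReflectionAlg_single_of_eq_zero {α l : M} {c : M →+ ℤ} (hl : c l = 0) (r : ℤ) :
    demazureReflectionAlg α c (single l r) = single l r := by
  rw [demazureReflectionAlg_single, demazureReflection_apply, hl, zero_smul, sub_zero]

theorem demazureReflectionAlg_comm {α β : M} {cα cβ : M →+ ℤ} (h1 : cα β = 0) (h2 : cβ α = 0)
    (u : AddMonoidAlgebra ℤ M) :
    demazureReflectionAlg α cα (demazureReflectionAlg β cβ u) =
      demazureReflectionAlg β cβ (demazureReflectionAlg α cα u) := by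
  have hcomp : (demazureReflection α cα).comp (demazureReflection β cβ) =
      (demazureReflection β cβ).comp (demazureReflection α cα) :=
    AddMonoidHom.ext (demazureReflection_comm h1 h2)
  change ((mapDomainRingHom ℤ _).comp (mapDomainRingHom ℤ _)) u =
    ((mapDomainRingHom ℤ _).comp (mapDomainRingHom ℤ _)) u
  rw [← mapDomainRingHom_comp, hcomp, mapDomainRingHom_comp]

end Reflections

theorem one_sub_single_ne_zero {R M : Type*} [Ring R] [Nontrivial R] [AddMonoid M] {γ : M}
    (hγ : γ ≠ 0) : (1 : AddMonoidAlgebra R M) - single γ 1 ≠ 0 := by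
  rw [sub_ne_zero, one_def, Ne, single_left_inj one_ne_zero]
  exact hγ.symm

theorem uniqueSums_of_free_int (M : Type*) [AddCommGroup M] [Module.Free ℤ M] : UniqueSums M :=
  (Module.Free.chooseBasis ℤ M).repr.toAddEquiv.uniqueSums_iff.mpr inferInstance

theorem demazure_commute_general {M : Type*} [AddCommGroup M]
    [Module.Free ℤ M]
    (α β : M)
    (cα cβ : M →+ ℤ) (hcα : cα α = 2) (hcβ : cβ β = 2)
    (δα δβ : AddMonoidAlgebra ℤ M →ₗ[ℤ] AddMonoidAlgebra ℤ M)
    (hδα : ∀ u : AddMonoidAlgebra ℤ M,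
      (1 - single (-α) 1) * δα u = u - single (-α) 1 * demazureReflectionAlg α cα u)
    (hδβ : ∀ u : AddMonoidAlgebra ℤ M,
      (1 - single (-β) 1) * δβ u = u - single (-β) 1 * demazureReflectionAlg β cβ u)
    (h1 : cα β = 0) (h2 : cβ α = 0) :
    ∀ u : AddMonoidAlgebra ℤ M, δα (δβ u) = δβ (δα u) := by
  have := uniqueSums_of_free_int M
  have hα : -α ≠ 0 := neg_ne_zero.mpr fun h => by simp [h] at hcα
  have hβ : -β ≠ 0 := neg_ne_zero.mpr fun h => by simp [h] at hcβ
  exact demazure_comm (one_sub_single_ne_zero hα) (one_sub_single_ne_zero hβ) hδα hδβ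
    (demazureReflectionAlg_single_of_eq_zero (by simp [h1]) 1)
    (demazureReflectionAlg_single_of_eq_zero (by simp [h2]) 1)
    (demazureReflectionAlg_comm h1 h2)

/-- Commutation relation in type A1 × A1: if cα(β) = 0 and cβ(α) = 0 then the
Demazure operators δα and δβ commute. -/
theorem demazure_commute {M : Type*} [AddCommGroup M]
    [Module.Free ℤ M] [Module.Finite ℤ M]
    (α β : M) (hαβ : LinearIndependent ℤ ![α, β])
    (cα cβ : M →+ ℤ) (hcα : cα α = 2) (hcβ : cβ β = 2)
    (δα δβ : AddMonoidAlgebra ℤ M →ₗ[ℤ] AddMonoidAlgebra ℤ M)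
    (hδα : ∀ u : AddMonoidAlgebra ℤ M,
      (1 - single (-α) 1) * δα u = u - single (-α) 1 * demazureReflectionAlg α cα u)
    (hδβ : ∀ u : AddMonoidAlgebra ℤ M,
      (1 - single (-β) 1) * δβ u = u - single (-β) 1 * demazureReflectionAlg β cβ u)
    (h1 : cα β = 0) (h2 : cβ α = 0) :
    ∀ u : AddMonoidAlgebra ℤ M, δα (δβ u) = δβ (δα u) :=
  demazure_commute_general α β cα cβ hcα hcβ δα δβ hδα hδβ h1 h2
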